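/- Let n be a positive integer, k a positive integer, and z a non-decreasing k-coloring of {1,…,n}. For every nonzero γ ∈ ker_ℤ DC_{n,z} there exist non-intersecting pairs {u,v}, {u',v'} ∈ P with z(u) = z(u') such that γ_{uv} and γ_{u'v'} are both positive or both negative (equivalently, x_{uv} x_{u'v'} divides x^{γ⁺} or x^{γ⁻}). -/

import Mathlib

/-!
Suppose no two non-intersecting chords `{u, v}`, `{u', v'}` with `z u = z u'` carry values of
the same sign. Let `a` be the least left endpoint of a chord in the support of `γ`. The degree
condition at `a` gives a positive and a negative chord from `a`, and nesting forces the positive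
chord ending first among those starting in the color class of `a` to be a chord `{a, v}`;
likewise a negative chord `{a, q}`. If `v < q`, the color condition puts `v` and `q` in one color
class. Every chord ending in that class before `q` is nonnegative (a negative one would nest in
`{a, q}`), so the degree conditions on the part of the class from `q` on produce a positive chord
leaving it at or after `q`, which misses `{a, v}`. Exchanging `γ` and `-γ` rules out `q < v`,
and `v = q` is absurd.
-/

open Finset

/-- The set `P` of 2-element subsets of `{1,…,n}`, encoded as ordered pairs. -/
abbrev Edge (n : ℕ) : Type := {p : Fin n × Fin n // p.1 < p.2}

/-- Entry `γ_{uv}` of a vector `γ ∈ ℤ^P` at the unordered pair `{u,v}` (0 when `u = v`). -/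
def ent {n : ℕ} (γ : Edge n → ℤ) (u v : Fin n) : ℤ :=
  if h : u < v then γ ⟨(u, v), h⟩ else if h : v < u then γ ⟨(v, u), h⟩ else 0

/-- Entry at `{u,v}` of a vector in `ℕ^P`. -/
def entN {n : ℕ} (x : Edge n → ℕ) (u v : Fin n) : ℕ :=
  if h : u < v then x ⟨(u, v), h⟩ else if h : v < u then x ⟨(v, u), h⟩ else 0

/-- Degree sequence: `d(γ)_u = ∑_{v ≠ u} γ_{uv}`. -/
def degSeq {n : ℕ} (γ : Edge n → ℤ) (u : Fin n) : ℤ := ∑ v, ent γ u v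

/-- Color sequence: `c(γ)_{ij} = ∑ γ_{uv}` over `{u,v} ∈ P` with `{z u, z v} = {i,j}`. -/
def colorSeq {n k : ℕ} (z : Fin n → Fin k) (γ : Edge n → ℤ) (i j : Fin k) : ℤ :=
  ∑ e : Edge n,
    if (z e.1.1 = i ∧ z e.1.2 = j) ∨ (z e.1.1 = j ∧ z e.1.2 = i) then γ e else 0

/-- `γ ∈ ker_ℤ DC_{n,z}`: both the degree sequence and the color sequence vanish. -/
def inKer {n k : ℕ} (z : Fin n → Fin k) (γ : Edge n → ℤ) : Prop :=
  (∀ u, degSeq γ u = 0) ∧ ∀ i j, colorSeq z γ i j = 0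

/-- The 1-norm `‖γ‖₁ = ∑_{e ∈ P} |γ_e|`. -/
def norm1 {n : ℕ} (γ : Edge n → ℤ) : ℤ := ∑ e, |γ e|

/-- The set of moves `M_{n,z} = {γ ∈ ker_ℤ DC_{n,z} : ‖γ‖₁ = 4}`. -/
def MSet {n k : ℕ} (z : Fin n → Fin k) : Set (Edge n → ℤ) :=
  {γ | inKer z γ ∧ norm1 γ = 4}

/-- Degree sequence of a vector in `ℕ^P`. -/
def degSeqN {n : ℕ} (x : Edge n → ℕ) (u : Fin n) : ℕ := ∑ v, entN x u v

/-- Color sequence of a vector in `ℕ^P`. -/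
def colorSeqN {n k : ℕ} (z : Fin n → Fin k) (x : Edge n → ℕ) (i j : Fin k) : ℕ :=
  ∑ e : Edge n,
    if (z e.1.1 = i ∧ z e.1.2 = j) ∨ (z e.1.1 = j ∧ z e.1.2 = i) then x e else 0

/-- The fiber `F(b) = {x ∈ ℕ^P : DC_{n,z} x = b}`, where `b = (d; c)`. -/
def Fiber {n k : ℕ} (z : Fin n → Fin k) (d : Fin n → ℤ) (c : Fin k → Fin k → ℤ) :
    Set (Edge n → ℕ) :=
  {x | (∀ u, (degSeqN x u : ℤ) = d u) ∧ ∀ i j, (colorSeqN z x i j : ℤ) = c i j}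

/-- The simple fiber `F̃(b) = F(b) ∩ {0,1}^P`. -/
def SimpleFiber {n k : ℕ} (z : Fin n → Fin k) (d : Fin n → ℤ) (c : Fin k → Fin k → ℤ) :
    Set (Edge n → ℕ) :=
  {x | x ∈ Fiber z d c ∧ ∀ e, x e ≤ 1}

/-- The difference `x − x' ∈ ℤ^P` of two vectors in `ℕ^P`. -/
def diff {n : ℕ} (x x' : Edge n → ℕ) : Edge n → ℤ := fun e => (x e : ℤ) - (x' e : ℤ)

/-- Two chords `{a,b}` and `{a',b'}` (with `a < b`, `a' < b'`) of the circle cross. -/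
def Crossing {n : ℕ} (a b a' b' : Fin n) : Prop :=
  (a < a' ∧ a' < b ∧ b < b') ∨ (a' < a ∧ a < b' ∧ b' < b)

/-- The unordered pairs `{a,b}` and `{a',b'}` are disjoint and do not cross. -/
def NonIntersecting {n : ℕ} (a b a' b' : Fin n) : Prop :=
  a ≠ a' ∧ a ≠ b' ∧ b ≠ a' ∧ b ≠ b' ∧
    ¬ Crossing (min a b) (max a b) (min a' b') (max a' b')

def HasSameSignPair {n k : ℕ} (z : Fin n → Fin k) (γ : Edge n → ℤ) : Prop :=
  ∃ u v u' v' : Fin n, u ≠ v ∧ u' ≠ v' ∧ NonIntersecting u v u' v' ∧ z u = z u' ∧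
    ((0 < ent γ u v ∧ 0 < ent γ u' v') ∨ (ent γ u v < 0 ∧ ent γ u' v' < 0))

structure IsLeastPositiveEnd {n k : ℕ} (z : Fin n → Fin k) (γ : Edge n → ℤ) (a v : Fin n) :
    Prop where
  lt : a < v
  ent_pos : 0 < ent γ a v
  le : ∀ e : Edge n, z e.1.1 = z a → 0 < γ e → v ≤ e.1.2

section

variable {n k : ℕ}

theorem nonIntersecting_comm_left {a b a' b' : Fin n} :
    NonIntersecting b a a' b' ↔ NonIntersecting a b a' b' := by
  simp only [NonIntersecting, min_comm b a, max_comm b a]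
  tauto

theorem nonIntersecting_comm_right {a b a' b' : Fin n} :
    NonIntersecting a b b' a' ↔ NonIntersecting a b a' b' := by
  simp only [NonIntersecting, min_comm b' a', max_comm b' a']
  tauto

theorem nonIntersecting_of_nested {a b a' b' : Fin n} (h₁ : a < a') (h₂ : a' < b') (h₃ : b' < b) :
    NonIntersecting a b a' b' := by
  simp only [NonIntersecting, Crossing, Fin.lt_def, Fin.ne_iff_vne, min_def, max_def,
    Fin.le_def] at *
  split_ifs <;> omega

theorem nonIntersecting_of_lt {a b a' b' : Fin n} (h₁ : a < b) (h₂ : b < a') (h₃ : a' < b') :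
    NonIntersecting a b a' b' := by
  simp only [NonIntersecting, Crossing, Fin.lt_def, Fin.ne_iff_vne, min_def, max_def,
    Fin.le_def] at *
  split_ifs <;> omega

theorem ent_fst_snd (γ : Edge n → ℤ) (e : Edge n) : ent γ e.1.1 e.1.2 = γ e := by
  rw [ent, dif_pos e.2]

theorem ent_comm (γ : Edge n → ℤ) (u v : Fin n) : ent γ u v = ent γ v u := by
  unfold ent
  split_ifs with h₁ h₂ h₃ <;> first | rfl | exact absurd h₁ (asymm ‹_›)

theorem ent_neg (γ : Edge n → ℤ) (u v : Fin n) : ent (-γ) u v = -ent γ u v := by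
  unfold ent
  split_ifs <;> simp

theorem sum_fst_eq_and_snd_eq (γ : Edge n → ℤ) (u v : Fin n) :
    ∑ e with e.1.1 = u ∧ e.1.2 = v, γ e = if h : u < v then γ ⟨(u, v), h⟩ else 0 := by
  split_ifs with h
  · refine sum_eq_single_of_mem _ (by simp) fun e he hne => absurd ?_ hne
    obtain ⟨h₁, h₂⟩ := (mem_filter.1 he).2
    exact Subtype.ext (Prod.ext h₁ h₂)
  · refine sum_eq_zero fun e he => absurd ?_ h
    obtain ⟨rfl, rfl⟩ := (mem_filter.1 he).2
    exact e.2

theorem ent_eq_sum_add_sum (γ : Edge n → ℤ) (u v : Fin n) :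
    ent γ u v = ∑ e with e.1.1 = u ∧ e.1.2 = v, γ e + ∑ e with e.1.1 = v ∧ e.1.2 = u, γ e := by
  rw [sum_fst_eq_and_snd_eq, sum_fst_eq_and_snd_eq, ent]
  split_ifs with h₁ h₂ <;> first | exact absurd h₁ (asymm ‹_›) | simp

theorem degSeq_eq_sum_add_sum (γ : Edge n → ℤ) (w : Fin n) :
    degSeq γ w = ∑ e with e.1.1 = w, γ e + ∑ e with e.1.2 = w, γ e := by
  simp only [degSeq, ent_eq_sum_add_sum, sum_add_distrib]
  congr 1
  · rw [← sum_fiberwise _ (fun e : Edge n => e.1.2)]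
    simp only [filter_filter]
  · rw [← sum_fiberwise _ (fun e : Edge n => e.1.1)]
    simp only [filter_filter, and_comm]

theorem sum_degSeq (γ : Edge n → ℤ) (W : Finset (Fin n)) :
    ∑ w ∈ W, degSeq γ w = ∑ e with e.1.1 ∈ W, γ e + ∑ e with e.1.2 ∈ W, γ e := by
  simp only [degSeq_eq_sum_add_sum, sum_add_distrib, sum_fiberwise_eq_sum_filter]

theorem colorSeq_neg (z : Fin n → Fin k) (γ : Edge n → ℤ) (i j : Fin k) :
    colorSeq z (-γ) i j = -colorSeq z γ i j := by
  simp only [colorSeq, ← sum_neg_distrib, Pi.neg_apply, apply_ite Neg.neg, neg_zero]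

theorem degSeq_neg (γ : Edge n → ℤ) (u : Fin n) : degSeq (-γ) u = -degSeq γ u := by
  simp only [degSeq, ent_neg, sum_neg_distrib]

theorem inKer.neg {z : Fin n → Fin k} {γ : Edge n → ℤ} (h : inKer z γ) : inKer z (-γ) :=
  ⟨fun u => by rw [degSeq_neg, h.1, neg_zero], fun i j => by rw [colorSeq_neg, h.2, neg_zero]⟩

theorem hasSameSignPair_neg {z : Fin n → Fin k} {γ : Edge n → ℤ} :
    HasSameSignPair z (-γ) ↔ HasSameSignPair z γ := by
  simp only [HasSameSignPair, ent_neg, neg_pos, neg_lt_zero, or_comm]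

end

section

variable {n k : ℕ} {z : Fin n → Fin k} {γ : Edge n → ℤ}

theorem sum_fst_color_snd_color_eq_zero (hz : Monotone z) (hcol : ∀ i j, colorSeq z γ i j = 0)
    (i j : Fin k) : ∑ e with z e.1.1 = i ∧ z e.1.2 = j, γ e = 0 := by
  rcases le_or_gt i j with hij | hji
  · rw [← hcol i j, colorSeq, ← sum_filter]
    refine sum_congr (filter_congr fun e _ => ⟨Or.inl, ?_⟩) fun _ _ => rfl
    rintro (h | ⟨h₁, h₂⟩)
    · exact h
    · have hji : j ≤ i := h₁ ▸ h₂ ▸ hz e.2.le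
      exact ⟨h₁.trans (le_antisymm hji hij), h₂.trans (le_antisymm hji hij).symm⟩
  · refine sum_eq_zero fun e he => absurd (hz e.2.le) ?_
    obtain ⟨h₁, h₂⟩ := (mem_filter.1 he).2
    rw [h₁, h₂]
    exact not_le.2 hji

theorem sum_snd_color_eq_zero (hz : Monotone z) (hcol : ∀ i j, colorSeq z γ i j = 0)
    (c : Fin k) : ∑ e with z e.1.2 = c, γ e = 0 := by
  rw [← sum_fiberwise _ (fun e : Edge n => z e.1.1)]
  refine sum_eq_zero fun i _ => ?_
  simpa only [filter_filter, and_comm] using sum_fst_color_snd_color_eq_zero hz hcol i c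

-- The color condition makes the chords ending in class `c` sum to zero, and the degree condition
-- does the same for the chords at the vertices of class `c` from `q` on.
theorem exists_pos_fst_color_ge (hz : Monotone z) (hker : inKer z γ) {c : Fin k} {q : Fin n}
    (hnonneg : ∀ e : Edge n, z e.1.2 = c → e.1.2 < q → 0 ≤ γ e) {e₀ : Edge n}
    (hc₀ : z e₀.1.2 = c) (hq₀ : e₀.1.2 < q) (hpos₀ : 0 < γ e₀) :
    ∃ e : Edge n, z e.1.1 = c ∧ q ≤ e.1.1 ∧ 0 < γ e := by
  have hbefore : 0 < ∑ e with z e.1.2 = c ∧ e.1.2 < q, γ e :=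
    sum_pos' (fun e he => hnonneg e (mem_filter.1 he).2.1 (mem_filter.1 he).2.2)
      ⟨e₀, by simp [hc₀, hq₀], hpos₀⟩
  have hafter : ∑ e with z e.1.2 = c ∧ ¬e.1.2 < q, γ e < 0 := by
    have := sum_filter_add_sum_filter_not (univ.filter fun e : Edge n => z e.1.2 = c)
      (fun e => e.1.2 < q) γ
    rw [filter_filter, filter_filter, sum_snd_color_eq_zero hz hker.2] at this
    linarith
  have hdeg := sum_degSeq γ (univ.filter fun w => z w = c ∧ ¬w < q)
  simp only [sum_eq_zero fun w _ => hker.1 w, mem_filter, mem_univ, true_and] at hdeg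
  obtain ⟨e, he, hpos⟩ : ∃ e ∈ univ.filter fun e : Edge n => z e.1.1 = c ∧ ¬e.1.1 < q, 0 < γ e :=
    exists_lt_of_sum_lt (f := fun _ => 0) (by rw [sum_const_zero]; linarith)
  simp only [mem_filter, mem_univ, true_and, not_lt] at he
  exact ⟨e, he.1, he.2, hpos⟩

end

section

variable {n k : ℕ} {z : Fin n → Fin k} {γ : Edge n → ℤ} {a : Fin n}

theorem exists_pos_fst_eq (hdeg : degSeq γ a = 0) (ha : ∀ e : Edge n, γ e ≠ 0 → a ≤ e.1.1)
    {e₀ : Edge n} (h₀ : e₀.1.1 = a) (hne : γ e₀ ≠ 0) : ∃ e : Edge n, e.1.1 = a ∧ 0 < γ e := by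
  have hsnd : ∑ e with e.1.2 = a, γ e = 0 :=
    sum_eq_zero fun e he => by_contra fun h => (ha e h).not_gt ((mem_filter.1 he).2 ▸ e.2)
  rw [degSeq_eq_sum_add_sum, hsnd, add_zero] at hdeg
  obtain ⟨e, he, hpos⟩ := exists_pos_of_sum_zero_of_exists_nonzero γ hdeg ⟨e₀, by simp [h₀], hne⟩
  exact ⟨e, (mem_filter.1 he).2, hpos⟩

theorem exists_isLeastPositiveEnd (hno : ¬HasSameSignPair z γ)
    (ha : ∀ e : Edge n, γ e ≠ 0 → a ≤ e.1.1) (hpos : ∃ e : Edge n, e.1.1 = a ∧ 0 < γ e) :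
    ∃ v, IsLeastPositiveEnd z γ a v := by
  obtain ⟨ea, hea, hposa⟩ := hpos
  obtain ⟨e, he, hmin⟩ := exists_min_image (univ.filter fun e : Edge n => z e.1.1 = z a ∧ 0 < γ e)
    (fun e => e.1.2) ⟨ea, by simp [hea, hposa]⟩
  simp only [mem_filter, mem_univ, true_and] at he hmin
  have hle : ∀ e' : Edge n, z e'.1.1 = z a → 0 < γ e' → e.1.2 ≤ e'.1.2 :=
    fun e' h₁ h₂ => hmin e' ⟨h₁, h₂⟩
  refine ⟨e.1.2, (ha e he.2.ne').trans_lt e.2, ?_, hle⟩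
  rcases (ha e he.2.ne').eq_or_lt with hfst | hfst
  · rw [hfst, ent_fst_snd]
    exact he.2
  rcases (hle ea (hea ▸ rfl) hposa).eq_or_lt with hsnd | hsnd
  · rw [← hea, hsnd, ent_fst_snd]
    exact hposa
  · refine absurd ⟨a, ea.1.2, e.1.1, e.1.2, (hea ▸ ea.2).ne, e.2.ne, ?_, he.1.symm,
      Or.inl ⟨?_, ?_⟩⟩ hno
    · exact nonIntersecting_of_nested hfst e.2 hsnd
    · rw [← hea, ent_fst_snd]
      exact hposa
    · rw [ent_fst_snd]
      exact he.2

theorem IsLeastPositiveEnd.nonneg_of_snd_lt {q : Fin n} (hq : IsLeastPositiveEnd z (-γ) a q)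
    (hno : ¬HasSameSignPair z γ) (ha : ∀ e : Edge n, γ e ≠ 0 → a ≤ e.1.1) (e : Edge n)
    (hc : z e.1.2 = z q) (hlt : e.1.2 < q) : 0 ≤ γ e := by
  by_contra! hneg
  rcases (ha e hneg.ne).eq_or_lt with hfst | hfst
  · exact (hq.le e (by rw [hfst]) (neg_pos.2 hneg)).not_gt hlt
  · refine hno ⟨q, a, e.1.2, e.1.1, hq.lt.ne', e.2.ne', ?_, hc.symm, Or.inr ⟨?_, ?_⟩⟩
    · rw [nonIntersecting_comm_left, nonIntersecting_comm_right]
      exact nonIntersecting_of_nested hfst e.2 hlt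
    · rw [ent_comm, ← neg_pos, ← ent_neg]
      exact hq.ent_pos
    · rwa [ent_comm, ent_fst_snd]

theorem IsLeastPositiveEnd.le_of_ent_pos {q v : Fin n} (hq : IsLeastPositiveEnd z (-γ) a q)
    (hz : Monotone z) (hker : inKer z γ) (hno : ¬HasSameSignPair z γ)
    (ha : ∀ e : Edge n, γ e ≠ 0 → a ≤ e.1.1) (hav : a < v) (hv : 0 < ent γ a v) : q ≤ v := by
  by_contra! hvq
  have hpos : 0 < γ ⟨(a, v), hav⟩ := ent_fst_snd γ ⟨(a, v), hav⟩ ▸ hv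
  obtain ⟨e, he, hneg⟩ := exists_pos_of_sum_zero_of_exists_nonzero (-γ)
    (sum_fst_color_snd_color_eq_zero hz hker.neg.2 (z a) (z v))
    ⟨⟨(a, v), hav⟩, by simp, by simpa using hpos.ne'⟩
  simp only [mem_filter, mem_univ, true_and] at he
  have hzq : z q = z v := le_antisymm (he.2 ▸ hz (hq.le e he.1 hneg)) (hz hvq.le)
  obtain ⟨e₁, hc₁, hq₁, hpos₁⟩ := exists_pos_fst_color_ge hz hker
    (fun e hc hlt => hq.nonneg_of_snd_lt hno ha e (hc.trans hzq.symm) hlt) rfl hvq hpos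
  refine hno ⟨v, a, e₁.1.1, e₁.1.2, hav.ne', e₁.2.ne, ?_, hc₁.symm, Or.inl ⟨?_, ?_⟩⟩
  · rw [nonIntersecting_comm_left]
    exact nonIntersecting_of_lt hav (hvq.trans_le hq₁) e₁.2
  · rwa [ent_comm]
  · rwa [ent_fst_snd]

end

theorem exists_nonintersecting_same_sign_same_color_general (n k : ℕ)
    (z : Fin n → Fin k) (hz : Monotone z)
    (γ : Edge n → ℤ) (hγ : inKer z γ) (hne : γ ≠ 0) :
    ∃ u v u' v' : Fin n, u ≠ v ∧ u' ≠ v' ∧ NonIntersecting u v u' v' ∧ z u = z u' ∧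
      ((0 < ent γ u v ∧ 0 < ent γ u' v') ∨ (ent γ u v < 0 ∧ ent γ u' v' < 0)) := by
  by_contra hno
  change ¬HasSameSignPair z γ at hno
  obtain ⟨e₀, he₀⟩ := Function.ne_iff.1 hne
  obtain ⟨e, he, hmin⟩ := exists_min_image (univ.filter fun e : Edge n => γ e ≠ 0)
    (fun e => e.1.1) ⟨e₀, by simpa using he₀⟩
  simp only [mem_filter, mem_univ, true_and] at he hmin
  have hmin' : ∀ e' : Edge n, (-γ) e' ≠ 0 → e.1.1 ≤ e'.1.1 := fun e' h => hmin e' (neg_ne_zero.1 h)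
  have hno' : ¬HasSameSignPair z (-γ) := hasSameSignPair_neg.not.2 hno
  obtain ⟨v, hv⟩ := exists_isLeastPositiveEnd hno hmin (exists_pos_fst_eq (hγ.1 _) hmin rfl he)
  obtain ⟨q, hq⟩ := exists_isLeastPositiveEnd hno' hmin'
    (exists_pos_fst_eq (hγ.neg.1 _) hmin' rfl (neg_ne_zero.2 he))
  have hqv : q ≤ v := hq.le_of_ent_pos hz hγ hno hmin hv.lt hv.ent_pos
  have hvq : v ≤ q := by
    rw [← neg_neg γ] at hv
    exact hv.le_of_ent_pos hz hγ.neg hno' hmin' hq.lt hq.ent_pos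
  have := hq.ent_pos
  rw [le_antisymm hqv hvq, ent_neg] at this
  linarith [hv.ent_pos]

/-- For a non-decreasing coloring, every nonzero `γ ∈ ker_ℤ DC_{n,z}`
has two non-intersecting pairs `{u,v}`, `{u',v'}` with `z u = z u'` carrying values of the
same sign. -/
theorem exists_nonintersecting_same_sign_same_color (n k : ℕ) (hn : 0 < n) (hk : 0 < k)
    (z : Fin n → Fin k) (hz : Monotone z)
    (γ : Edge n → ℤ) (hγ : inKer z γ) (hne : γ ≠ 0) :
    ∃ u v u' v' : Fin n, u ≠ v ∧ u' ≠ v' ∧ NonIntersecting u v u' v' ∧ z u = z u' ∧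
      ((0 < ent γ u v ∧ 0 < ent γ u' v') ∨ (ent γ u v < 0 ∧ ent γ u' v' < 0)) :=
  exists_nonintersecting_same_sign_same_color_general n k z hz γ hγ hne
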